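/- Let k ≥ 1 be an integer, λ > 0, β ∈ (0,1], and t ≥ 0. Define the probability mass function of the time-fractional Poisson process of order k by p_β^k(n,t) = ∑_{x ∈ Ω(k,n)} M_β^{(ζ(x))}(−kλt^β) · (λt^β)^{ζ(x)} / Π!(x), where M_β^{(j)} is the j-th derivative of the Mittag-Leffler function M_β. Then for every u ∈ [0,1], ∑_{n=0}^∞ u^n p_β^k(n,t) = M_β(−kλt^β(1 − (1/k)∑_{j=1}^k u^j)); that is, the probability generating function of the time-fractional Poisson process of order k equals the Mittag-Leffler function evaluated at −kλt^β(1 − g_k(u)). -/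

import Mathlib

/-!
Write `z = -kλt^β` and `a_i = λt^β u^i`. Since `Γ(βm + 1) ≥ ⌊βm⌋!`, the Mittag-Leffler function is
entire, so `M_β(z + a_1 + ⋯ + a_k) = ∑_m M_β^{(m)}(z) (a_1 + ⋯ + a_k)^m / m!`. Expanding the powers
by the multinomial theorem turns this into an absolutely convergent sum over all `x ∈ ℕ^k` of
`M_β^{(ζ(x))}(z) ∏ a_i^{x_i} / x_i!`. Grouped by `ζ(x)` it is the Taylor series again; grouped by
`x_1 + 2x_2 + ⋯ + kx_k = n` it is `∑_n u^n p_β^k(n,t)`.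
-/

open scoped BigOperators

/-- `Omega k n` is the (finite) set of tuples `(x₁,…,x_k)` of non-negative integers with
`x₁ + 2·x₂ + ⋯ + k·x_k = n`. -/
def Omega (k n : ℕ) : Finset (Fin k → ℕ) :=
  (Fintype.piFinset fun _ => Finset.range (n + 1)).filter
    (fun x => ∑ i, (i.1 + 1) * x i = n)

/-- `ζ(x) = x₁ + ⋯ + x_k`. -/
def zeta {k : ℕ} (x : Fin k → ℕ) : ℕ := ∑ i, x i

/-- `Π!(x) = x₁! ⋯ x_k!`. -/
def pifact {k : ℕ} (x : Fin k → ℕ) : ℕ := ∏ i, (x i).factorial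

/-- `c_k(n, y) = ∑_{x ∈ Ω(k,n)} y^{ζ(x)} / Π!(x)`. -/
noncomputable def ck (k n : ℕ) (y : ℝ) : ℝ :=
  ∑ x ∈ Omega k n, y ^ zeta x / (pifact x : ℝ)

/-- The Mittag-Leffler function `M_β(z) = ∑_{m=0}^∞ z^m / Γ(βm + 1)`. -/
noncomputable def mittagLeffler (β z : ℝ) : ℝ :=
  ∑' m : ℕ, z ^ m / Real.Gamma (β * m + 1)

/-- The pmf of the time-fractional Poisson process of order `k`:
`p_β^k(n,t) = ∑_{x ∈ Ω(k,n)} M_β^{(ζ(x))}(−kλt^β) (λt^β)^{ζ(x)} / Π!(x)`. -/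
noncomputable def pk (k : ℕ) (lam β : ℝ) (n : ℕ) (t : ℝ) : ℝ :=
  ∑ x ∈ Omega k n,
    iteratedDeriv (zeta x) (mittagLeffler β) (-(k * lam * t ^ β)) *
      (lam * t ^ β) ^ zeta x / (pifact x : ℝ)

open Real Finset FormalMultilinearSeries
open scoped Nat

theorem rpow_div_Gamma_add_one_le {A s : ℝ} (hA : 1 ≤ A) (hs : 1 ≤ s) :
    A ^ s / Gamma (s + 1) ≤ A * exp A := by
  set n := ⌊s⌋₊
  have hn : 1 ≤ n := Nat.le_floor (by exact_mod_cast hs)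
  have hn' : (1 : ℝ) ≤ n := by exact_mod_cast hn
  have h_fact : (n ! : ℝ) ≤ Gamma (s + 1) := by
    rw [← Gamma_nat_eq_factorial]
    exact Gamma_strictMonoOn_Ici.monotoneOn (by simp; linarith) (by simp; linarith)
      (by linarith [Nat.floor_le (by linarith : (0 : ℝ) ≤ s)])
  have h_pow : A ^ s ≤ A * A ^ n := by
    rw [← pow_succ', ← rpow_natCast]
    exact rpow_le_rpow_of_exponent_le hA (by push_cast; linarith [Nat.lt_floor_add_one s])
  calc A ^ s / Gamma (s + 1) ≤ A * A ^ n / n ! := by gcongr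
    _ = A * (A ^ n / n !) := mul_div_assoc _ _ _
    _ ≤ A * exp A := by gcongr; exact pow_div_factorial_le_exp A (by linarith) n

theorem summable_pow_div_Gamma_mul_add_one {β : ℝ} (hβ : 0 < β) {r : ℝ} (hr : 0 ≤ r) :
    Summable fun m : ℕ => r ^ m / Gamma (β * m + 1) := by
  -- `A ^ (β m) = (r + 1) ^ m`, so the terms are `O((r / (r + 1)) ^ m)`
  set A := (r + 1) ^ (1 / β)
  have hA : 1 ≤ A := one_le_rpow (by linarith) (by positivity)
  have h_geom : Summable fun m : ℕ => A * exp A * (r / (r + 1)) ^ m :=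
    (summable_geometric_of_lt_one (by positivity)
      ((div_lt_one (by linarith)).2 (by linarith))).mul_left _
  refine h_geom.of_norm_bounded_eventually ?_
  rw [Nat.cofinite_eq_atTop]
  filter_upwards [Filter.eventually_ge_atTop ⌈1 / β⌉₊] with m hm
  have hβm : 1 ≤ β * m := by
    rw [← div_le_iff₀' hβ]; exact (Nat.le_ceil _).trans (by exact_mod_cast hm)
  have hAm : A ^ (β * m) = (r + 1) ^ m := by
    rw [← rpow_mul (by linarith), ← mul_assoc, one_div_mul_cancel hβ.ne', one_mul, rpow_natCast]
  rw [norm_of_nonneg (div_nonneg (by positivity) (Gamma_pos_of_pos (by positivity)).le)]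
  calc r ^ m / Gamma (β * m + 1)
      = (r / (r + 1)) ^ m * (A ^ (β * m) / Gamma (β * m + 1)) := by
        rw [hAm, div_pow]; field_simp
    _ ≤ (r / (r + 1)) ^ m * (A * exp A) := by gcongr; exact rpow_div_Gamma_add_one_le hA hβm
    _ = A * exp A * (r / (r + 1)) ^ m := mul_comm _ _

noncomputable def mittagLefflerSeries (β : ℝ) : FormalMultilinearSeries ℝ ℝ ℝ :=
  ofScalars ℝ fun m => (Gamma (β * m + 1))⁻¹

theorem radius_mittagLefflerSeries {β : ℝ} (hβ : 0 < β) : (mittagLefflerSeries β).radius = ⊤ :=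
  radius_eq_top_of_summable_norm _ fun r =>
    (summable_pow_div_Gamma_mul_add_one hβ r.coe_nonneg).congr fun m => by
      rw [mittagLefflerSeries, ofScalars_norm, norm_inv,
        norm_of_nonneg (Gamma_pos_of_pos (by positivity)).le, inv_mul_eq_div]

theorem hasFPowerSeriesOnBall_mittagLeffler {β : ℝ} (hβ : 0 < β) :
    HasFPowerSeriesOnBall (mittagLeffler β) (mittagLefflerSeries β) 0 ⊤ := by
  have h := (mittagLefflerSeries β).hasFPowerSeriesOnBall
    (by rw [radius_mittagLefflerSeries hβ]; exact ENNReal.zero_lt_top)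
  rw [radius_mittagLefflerSeries hβ] at h
  convert h using 1
  ext z
  simp only [mittagLeffler, FormalMultilinearSeries.sum, mittagLefflerSeries, ofScalars_apply_eq,
    smul_eq_mul, div_eq_inv_mul]

namespace HasFPowerSeriesOnBall

section Field

variable {𝕜 : Type*} [NontriviallyNormedField 𝕜] [CompleteSpace 𝕜] [CharZero 𝕜] {f : 𝕜 → 𝕜}
  {p : FormalMultilinearSeries 𝕜 𝕜 𝕜}

theorem hasFPowerSeriesOnBall_ofScalars_iteratedDeriv (hf : HasFPowerSeriesOnBall f p 0 ⊤)
    (z : 𝕜) :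
    HasFPowerSeriesOnBall f (ofScalars 𝕜 fun n => iteratedDeriv n f z / n !) z ⊤ := by
  have hz : HasFPowerSeriesOnBall f (p.changeOrigin z) z ⊤ := by
    simpa using hf.changeOrigin (y := z) (by simp)
  rwa [hz.hasFPowerSeriesAt.eq_formalMultilinearSeries hz.analyticAt.hasFPowerSeriesAt] at hz

theorem hasSum_iteratedDeriv_mul_pow_div_factorial (hf : HasFPowerSeriesOnBall f p 0 ⊤)
    (z b : 𝕜) :
    HasSum (fun n => iteratedDeriv n f z * (b ^ n / n !)) (f (z + b)) := by
  refine ((hf.hasFPowerSeriesOnBall_ofScalars_iteratedDeriv z).hasSum (y := b) (by simp)).congr_fun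
    fun n => ?_
  rw [ofScalars_apply_eq, smul_eq_mul]
  ring

end Field

theorem summable_abs_iteratedDeriv_mul_pow_div_factorial {f : ℝ → ℝ}
    {p : FormalMultilinearSeries ℝ ℝ ℝ} (hf : HasFPowerSeriesOnBall f p 0 ⊤)
    (z : ℝ) {r : ℝ} (hr : 0 ≤ r) :
    Summable fun n => |iteratedDeriv n f z| * (r ^ n / n !) := by
  have h := (hf.hasFPowerSeriesOnBall_ofScalars_iteratedDeriv z).r_le
  refine (summable_norm_mul_pow _ (r := r.toNNReal) (lt_of_lt_of_le ENNReal.coe_lt_top h)).congr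
    fun n => ?_
  rw [ofScalars_norm, norm_div, Real.norm_eq_abs, RCLike.norm_natCast, Real.coe_toNNReal r hr]
  ring

end HasFPowerSeriesOnBall

section Fibers

variable {α : Type*} {g : α → ℕ} {s : ℕ → Finset α}

theorem hasSum_sum_fibers (hs : ∀ n x, x ∈ s n ↔ g x = n) {f : α → ℝ} {a : ℝ}
    (hf : HasSum f a) : HasSum (fun n => ∑ x ∈ s n, f x) a := by
  refine (hf.tsum_fiberwise g).congr_fun fun n => ?_
  rw [show g ⁻¹' {n} = ↑(s n) from Set.ext fun x => (hs n x).symm, Finset.tsum_subtype']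

theorem summable_of_summable_sum_fibers (hs : ∀ n x, x ∈ s n ↔ g x = n) {f : α → ℝ}
    (hf : 0 ≤ f) (h : Summable fun n => ∑ x ∈ s n, f x) : Summable f := by
  refine (summable_partition hf (s := fun n => ↑(s n)) fun x => ⟨g x, (hs _ x).2 rfl,
    fun n hn => ((hs n x).1 hn).symm⟩).2 ⟨fun n => (s n).summable f, ?_⟩
  simpa only [Finset.tsum_subtype'] using h

end Fibers

theorem sum_piAntidiag_prod_pow_div_factorial {k : ℕ} (a : Fin k → ℝ) (m : ℕ) :
    ∑ x ∈ piAntidiag univ m, ∏ i, a i ^ x i / (x i)! = (∑ i, a i) ^ m / m ! := by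
  rw [sum_pow_eq_sum_piAntidiag, sum_div]
  refine sum_congr rfl fun x hx => ?_
  have h_spec : ((∏ i, (x i)! : ℕ) : ℝ) * Nat.multinomial univ x = m ! := by
    rw [← (mem_piAntidiag.1 hx).1]; exact_mod_cast Nat.multinomial_spec univ x
  have h_multinomial : (Nat.multinomial univ x : ℝ) ≠ 0 := by
    exact_mod_cast (Nat.multinomial_pos univ x).ne'
  rw [prod_div_distrib, ← h_spec]
  push_cast
  field_simp

theorem mem_piAntidiag_univ_iff_zeta {k m : ℕ} {x : Fin k → ℕ} :
    x ∈ piAntidiag univ m ↔ zeta x = m := by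
  simp [zeta]

def weight {k : ℕ} (x : Fin k → ℕ) : ℕ := ∑ i, (i.1 + 1) * x i

theorem mem_Omega {k n : ℕ} {x : Fin k → ℕ} : x ∈ Omega k n ↔ weight x = n := by
  refine ⟨fun h => (mem_filter.1 h).2, fun h => mem_filter.2 ⟨Fintype.mem_piFinset.2 fun i => ?_, h⟩⟩
  rw [mem_range, Nat.lt_succ_iff, ← h]
  exact (Nat.le_mul_of_pos_left _ i.1.succ_pos).trans
    (single_le_sum (f := fun i : Fin k => (i.1 + 1) * x i) (by simp) (mem_univ i))

theorem hasSum_sum_Omega_mul_prod_pow_div_factorial {k : ℕ} (c : ℕ → ℝ) (a : Fin k → ℝ) {s : ℝ}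
    (hc : Summable fun m => |c m| * ((∑ i, |a i|) ^ m / m !))
    (hs : HasSum (fun m => c m * ((∑ i, a i) ^ m / m !)) s) :
    HasSum (fun n => ∑ x ∈ Omega k n, c (zeta x) * ∏ i, a i ^ x i / (x i)!) s := by
  set F : (Fin k → ℕ) → ℝ := fun x => c (zeta x) * ∏ i, a i ^ x i / (x i)!
  have h_fiber (b : Fin k → ℝ) (d : ℕ → ℝ) (m : ℕ) :
      ∑ x ∈ piAntidiag univ m, d (zeta x) * ∏ i, b i ^ x i / (x i)!
        = d m * ((∑ i, b i) ^ m / m !) := by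
    rw [← sum_piAntidiag_prod_pow_div_factorial, mul_sum]
    exact sum_congr rfl fun x hx => by rw [mem_piAntidiag_univ_iff_zeta.1 hx]
  have h_abs (x : Fin k → ℕ) : |F x| = |c (zeta x)| * ∏ i, |a i| ^ x i / (x i)! := by
    simp [F, abs_mul, abs_prod, abs_div, abs_pow]
  have hF : Summable F := by
    refine (summable_of_summable_sum_fibers (fun m x => mem_piAntidiag_univ_iff_zeta)
      (fun x => abs_nonneg (F x)) ?_).of_abs
    refine hc.congr fun m => ?_
    simp only [h_abs]
    exact (h_fiber (fun i => |a i|) (fun m => |c m|) m).symm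
  have h_tsum : ∑' x, F x = s :=
    ((hasSum_sum_fibers (fun m x => mem_piAntidiag_univ_iff_zeta) hF.hasSum).congr_fun
      fun m => (h_fiber a c m).symm).unique hs
  exact hasSum_sum_fibers (fun n x => mem_Omega) (h_tsum ▸ hF.hasSum)

theorem prod_mul_pow_pow_div_factorial {k : ℕ} (w u : ℝ) (x : Fin k → ℕ) :
    ∏ i, (w * u ^ (i.1 + 1)) ^ x i / ((x i)! : ℝ) = w ^ zeta x * u ^ weight x / pifact x := by
  simp only [prod_div_distrib, mul_pow, prod_mul_distrib, ← pow_mul, prod_pow_eq_pow_sum, zeta,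
    weight, pifact, Nat.cast_prod, mul_comm _ (x _)]

theorem pgf_time_fractional_poisson_of_order_k_general
    (k : ℕ) (lam β t : ℝ) (hβ : β ∈ Set.Ioc (0 : ℝ) 1)
    (u : ℝ) :
    ∑' n : ℕ, u ^ n * pk k lam β n t =
      mittagLeffler β
        (-(k * lam * t ^ β * (1 - (1 / k) * ∑ j ∈ Finset.range k, u ^ (j + 1)))) := by
  have hML := hasFPowerSeriesOnBall_mittagLeffler hβ.1
  set z := -(k * lam * t ^ β)
  set a : Fin k → ℝ := fun i => lam * t ^ β * u ^ (i.1 + 1)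
  have h_pgf := hasSum_sum_Omega_mul_prod_pow_div_factorial
    (fun m => iteratedDeriv m (mittagLeffler β) z) a
    (hML.summable_abs_iteratedDeriv_mul_pow_div_factorial z (sum_nonneg fun i _ => abs_nonneg _))
    (hML.hasSum_iteratedDeriv_mul_pow_div_factorial z _)
  calc ∑' n : ℕ, u ^ n * pk k lam β n t
      = ∑' n : ℕ, ∑ x ∈ Omega k n,
          iteratedDeriv (zeta x) (mittagLeffler β) z * ∏ i, a i ^ x i / ((x i)! : ℝ) := by
        refine tsum_congr fun n => ?_
        rw [pk, mul_sum]
        refine sum_congr rfl fun x hx => ?_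
        rw [prod_mul_pow_pow_div_factorial, mem_Omega.1 hx]
        ring
    _ = mittagLeffler β (z + ∑ i, a i) := h_pgf.tsum_eq
    _ = _ := by
        congr 1
        rw [Fin.sum_univ_eq_sum_range (fun j => lam * t ^ β * u ^ (j + 1)), ← mul_sum]
        rcases Nat.eq_zero_or_pos k with rfl | hk
        · simp [z]
        · field_simp
          ring

/-- The probability generating function of the time-fractional Poisson process of order `k`:
`∑_{n=0}^∞ uⁿ p_β^k(n,t) = M_β(−kλt^β(1 − (1/k)∑_{j=1}^k u^j))` for `u ∈ [0,1]`. -/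
theorem pgf_time_fractional_poisson_of_order_k
    (k : ℕ) (hk : 1 ≤ k) (lam β t : ℝ) (hlam : 0 < lam) (hβ : β ∈ Set.Ioc (0 : ℝ) 1)
    (ht : 0 ≤ t) (u : ℝ) (hu : u ∈ Set.Icc (0 : ℝ) 1) :
    ∑' n : ℕ, u ^ n * pk k lam β n t =
      mittagLeffler β
        (-(k * lam * t ^ β * (1 - (1 / k) * ∑ j ∈ Finset.range k, u ^ (j + 1)))) :=
  pgf_time_fractional_poisson_of_order_k_general k lam β t hβ u
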